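/- Let S be a Hermiticity-preserving linear map from d×d complex matrices to m×m complex matrices. Then ‖S‖_⋄ = d·‖S‖_ME if and only if there exists a unit vector φ ∈ ℂ^d such that M(S) = ‖J(S)‖₁ · φφᴴ (the M-operator is ‖J(S)‖₁ times the rank-one orthogonal projection onto the span of φ). -/

import Mathlib

open Matrix Kronecker ComplexOrder

noncomputable section

/-- The positive semidefinite square root of a PSD matrix (the Mathlib definition of
December 2024, since removed from Mathlib). -/
noncomputable def Matrix.PosSemidef.sqrt {n : Type*} [Fintype n] [DecidableEq n]
    {A : Matrix n n ℂ} (hA : A.PosSemidef) : Matrix n n ℂ :=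
  hA.1.eigenvectorUnitary.1 * diagonal ((↑) ∘ Real.sqrt ∘ hA.1.eigenvalues) *
    (star hA.1.eigenvectorUnitary : Matrix n n ℂ)

/-- The matrix absolute value `|A| = √(AᴴA)`. -/
noncomputable def matAbs {n : Type*} [Fintype n] [DecidableEq n] (A : Matrix n n ℂ) :
    Matrix n n ℂ :=
  (Matrix.posSemidef_conjTranspose_mul_self A).sqrt

/-- The trace norm `‖A‖₁ = Tr √(AᴴA)`. -/
noncomputable def traceNorm {n : Type*} [Fintype n] [DecidableEq n] (A : Matrix n n ℂ) : ℝ :=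
  ((matAbs A).trace).re

/-- The positive semidefinite square root of a PSD matrix (zero otherwise). -/
noncomputable def matSqrt {n : Type*} [Fintype n] [DecidableEq n] (σ : Matrix n n ℂ) :
    Matrix n n ℂ :=
  open scoped Classical in
  if h : σ.PosSemidef then h.sqrt else 0

/-- A density matrix: positive semidefinite with unit trace. -/
def IsDensity {n : Type*} [Fintype n] [DecidableEq n] (σ : Matrix n n ℂ) : Prop :=
  σ.PosSemidef ∧ σ.trace = 1

/-- The Choi operator of a linear map between matrix algebras. -/
noncomputable def choi {d m : ℕ}
    (S : Matrix (Fin d) (Fin d) ℂ →ₗ[ℂ] Matrix (Fin m) (Fin m) ℂ) :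
    Matrix (Fin m × Fin d) (Fin m × Fin d) ℂ :=
  ∑ i : Fin d, ∑ j : Fin d,
    (S (Matrix.single i j 1)) ⊗ₖ (Matrix.single i j 1)

/-- The ME-norm `‖S‖_ME = ‖J(S)‖₁ / d`. -/
noncomputable def MENorm {d m : ℕ}
    (S : Matrix (Fin d) (Fin d) ℂ →ₗ[ℂ] Matrix (Fin m) (Fin m) ℂ) : ℝ :=
  traceNorm (choi S) / d

/-- The diamond norm: supremum over density matrices σ of
`‖(1 ⊗ √σ) J(S) (1 ⊗ √σ)‖₁`. -/
noncomputable def diamondNorm {d m : ℕ}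
    (S : Matrix (Fin d) (Fin d) ℂ →ₗ[ℂ] Matrix (Fin m) (Fin m) ℂ) : ℝ :=
  ⨆ σ : {σ : Matrix (Fin d) (Fin d) ℂ // IsDensity σ},
    traceNorm (((1 : Matrix (Fin m) (Fin m) ℂ) ⊗ₖ matSqrt σ.1) * choi S *
      ((1 : Matrix (Fin m) (Fin m) ℂ) ⊗ₖ matSqrt σ.1))

/-- The M-operator `M(S) = Tr_B |J(S)|`. -/
noncomputable def Mop {d m : ℕ}
    (S : Matrix (Fin d) (Fin d) ℂ →ₗ[ℂ] Matrix (Fin m) (Fin m) ℂ) :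
    Matrix (Fin d) (Fin d) ℂ :=
  Matrix.of fun k l => ∑ b : Fin m, matAbs (choi S) (b, k) (b, l)

/-- A quantum channel: completely positive (PSD Choi operator, by Choi's theorem)
and trace preserving. -/
def IsQChannel {d m : ℕ}
    (S : Matrix (Fin d) (Fin d) ℂ →ₗ[ℂ] Matrix (Fin m) (Fin m) ℂ) : Prop :=
  (choi S).PosSemidef ∧ ∀ ρ : Matrix (Fin d) (Fin d) ℂ, (S ρ).trace = ρ.trace

/-! Write `J = J(S)`, `M = M(S)`, and for a density matrix `σ` put `X = 1 ⊗ √σ`. The operator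
inequalities `-|J| ≤ J ≤ |J|` survive conjugation by `X`, and a Hermitian `H` with `-K ≤ H ≤ K`
has `‖H‖₁ ≤ Tr K`; hence
`‖X J X‖₁ ≤ Tr (|J| (1 ⊗ σ)) = Tr (M σ) ≤ λ_max(M) ≤ Tr M = ‖J‖₁ = d ‖S‖_ME`.
Equality thus forces the largest eigenvalue of the positive matrix `M` to carry its whole trace,
i.e. `M = ‖J‖₁ φφᴴ`. Conversely, if `M = ‖J‖₁ P` with `P = φφᴴ`, then
`Tr (|J| (1 ⊗ P)) = Tr |J|`, so `|J|`, and with it `J`, is supported on the range of the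
projection `1 ⊗ P`; then `(1 ⊗ P) J (1 ⊗ P) = J`, and `σ = P` (for which `√P = P`) attains
`‖J‖₁`. -/

open scoped MatrixOrder

lemma Matrix.IsHermitian.kronecker {l n : Type*} {A : Matrix l l ℂ} {B : Matrix n n ℂ}
    (hA : A.IsHermitian) (hB : B.IsHermitian) : (A ⊗ₖ B).IsHermitian := by
  rw [IsHermitian, conjTranspose_kronecker, hA.eq, hB.eq]

lemma Matrix.PosSemidef.re_trace_eq_trace {n : Type*} [Fintype n] {A : Matrix n n ℂ}
    (hA : A.PosSemidef) : (A.trace.re : ℂ) = A.trace :=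
  (Complex.eq_re_of_ofReal_le (r := 0) (by simpa using hA.trace_nonneg)).symm

lemma vecMulVec_star_mul_self {n : Type*} [Fintype n] {φ : n → ℂ} (hφ : star φ ⬝ᵥ φ = 1) :
    vecMulVec φ (star φ) * vecMulVec φ (star φ) = vecMulVec φ (star φ) := by
  rw [vecMulVec_mul_vecMulVec, hφ, one_smul]

section Spectral

variable {n : Type*} [Fintype n] [DecidableEq n]

lemma Matrix.PosSemidef.sqrt_eq_cfcSqrt {A : Matrix n n ℂ} (hA : A.PosSemidef) :
    hA.sqrt = CFC.sqrt A := by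
  have hdef : hA.sqrt = (hA.1.eigenvectorUnitary : Matrix n n ℂ) *
      diagonal (fun i => ((Real.sqrt (hA.1.eigenvalues i) : ℝ) : ℂ)) *
      star (hA.1.eigenvectorUnitary : Matrix n n ℂ) := rfl
  rw [CFC.sqrt_eq_cfc, cfc_nnreal_eq_real _ A, hA.1.cfc_eq, hdef]
  simp only [IsHermitian.cfc, Unitary.conjStarAlgAut_apply, Real.sqrt]
  rfl

lemma matAbs_eq_cfcAbs (A : Matrix n n ℂ) : matAbs A = CFC.abs A := by
  rw [matAbs, PosSemidef.sqrt_eq_cfcSqrt]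
  rfl

lemma matAbs_posSemidef (A : Matrix n n ℂ) : (matAbs A).PosSemidef := by
  rw [matAbs_eq_cfcAbs, ← nonneg_iff_posSemidef]
  exact CFC.abs_nonneg A

lemma matAbs_mul_matAbs (A : Matrix n n ℂ) : matAbs A * matAbs A = Aᴴ * A := by
  rw [matAbs_eq_cfcAbs]
  exact CFC.abs_mul_abs A

lemma Matrix.IsHermitian.neg_matAbs_le {A : Matrix n n ℂ} (hA : A.IsHermitian) :
    -matAbs A ≤ A := by
  rw [matAbs_eq_cfcAbs, neg_le_iff_add_nonneg, add_comm, CFC.abs_add_self A hA.isSelfAdjoint]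
  exact smul_nonneg zero_le_two (CFC.posPart_nonneg A)

lemma Matrix.IsHermitian.le_matAbs {A : Matrix n n ℂ} (hA : A.IsHermitian) : A ≤ matAbs A := by
  rw [matAbs_eq_cfcAbs, ← sub_nonneg, CFC.abs_sub_self A hA.isSelfAdjoint]
  exact smul_nonneg zero_le_two (CFC.negPart_nonneg A)

lemma Matrix.IsHermitian.traceNorm_eq_sum_abs_eigenvalues {A : Matrix n n ℂ} (hA : A.IsHermitian) :
    traceNorm A = ∑ i, |hA.eigenvalues i| := by
  rw [traceNorm, matAbs_eq_cfcAbs, CFC.abs_eq_cfc_norm A hA.isSelfAdjoint, hA.cfc_eq,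
    IsHermitian.cfc, Unitary.conjStarAlgAut_apply, trace_mul_cycle, Unitary.coe_star_mul_self,
    one_mul, trace_diagonal]
  simp

lemma matSqrt_mul_self {σ : Matrix n n ℂ} (hσ : σ.PosSemidef) : matSqrt σ * matSqrt σ = σ := by
  rw [matSqrt, dif_pos hσ, hσ.sqrt_eq_cfcSqrt]
  exact CFC.sqrt_mul_sqrt_self σ hσ.nonneg

lemma matSqrt_isHermitian {σ : Matrix n n ℂ} (hσ : σ.PosSemidef) : (matSqrt σ).IsHermitian := by
  rw [matSqrt, dif_pos hσ, hσ.sqrt_eq_cfcSqrt]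
  exact (CFC.sqrt_nonneg σ).posSemidef.1

lemma matSqrt_eq_self_of_mul_self_eq {P : Matrix n n ℂ} (hP : P.PosSemidef) (hPP : P * P = P) :
    matSqrt P = P := by
  rw [matSqrt, dif_pos hP, hP.sqrt_eq_cfcSqrt]
  exact (CFC.sqrt_eq_iff P P hP.nonneg hP.nonneg).2 hPP

lemma isDensity_vecMulVec_star {φ : n → ℂ} (hφ : star φ ⬝ᵥ φ = 1) :
    IsDensity (vecMulVec φ (star φ)) :=
  ⟨posSemidef_vecMulVec_self_star φ, by rw [trace_vecMulVec, dotProduct_comm, hφ]⟩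

lemma Matrix.IsHermitian.traceNorm_le_re_trace {H K : Matrix n n ℂ} (hH : H.IsHermitian)
    (h₁ : -K ≤ H) (h₂ : H ≤ K) : traceNorm H ≤ K.trace.re := by
  set U := hH.eigenvectorUnitary
  set K' := star (U : Matrix n n ℂ) * K * U
  have hD : star (U : Matrix n n ℂ) * H * (U : Matrix n n ℂ) =
      diagonal (RCLike.ofReal ∘ hH.eigenvalues) := by
    rw [← hH.conjStarAlgAut_star_eigenvectorUnitary, Unitary.conjStarAlgAut_star_apply]
  have hK : ∀ i, |hH.eigenvalues i| ≤ (K' i i).re := by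
    intro i
    have hle := star_left_conjugate_le_conjugate h₂ (U : Matrix n n ℂ)
    have hge := star_left_conjugate_le_conjugate h₁ (U : Matrix n n ℂ)
    rw [hD, le_iff] at hle hge
    have e₁ : hH.eigenvalues i ≤ (K' i i).re := by
      simpa using (Complex.le_def.1 (hle.diag_nonneg (i := i))).1
    have e₂ : 0 ≤ hH.eigenvalues i + (K' i i).re := by
      simpa using (Complex.le_def.1 (hge.diag_nonneg (i := i))).1
    exact abs_le.2 ⟨by linarith, e₁⟩
  calc traceNorm H = ∑ i, |hH.eigenvalues i| := hH.traceNorm_eq_sum_abs_eigenvalues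
    _ ≤ ∑ i, (K' i i).re := Finset.sum_le_sum fun i _ => hK i
    _ = K'.trace.re := by rw [trace, Complex.re_sum]; rfl
    _ = K.trace.re := by rw [trace_mul_cycle, Unitary.mul_star_self_of_mem U.prop, one_mul]

lemma Matrix.IsHermitian.traceNorm_mul_mul_le {A X : Matrix n n ℂ} (hA : A.IsHermitian)
    (hX : X.IsHermitian) : traceNorm (X * A * X) ≤ (matAbs A * (X * X)).trace.re := by
  have hXstar : star X = X := hX
  have hconj := fun {B C : Matrix n n ℂ} (h : B ≤ C) =>
    hXstar ▸ star_left_conjugate_le_conjugate h X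
  have hXAX : (X * A * X).IsHermitian := by
    simpa [hX.eq] using isHermitian_conjTranspose_mul_mul X hA
  calc traceNorm (X * A * X) ≤ (X * matAbs A * X).trace.re :=
        hXAX.traceNorm_le_re_trace (by simpa using hconj hA.neg_matAbs_le) (hconj hA.le_matAbs)
    _ = (matAbs A * (X * X)).trace.re := by rw [trace_mul_cycle, trace_mul_comm]

lemma Matrix.PosSemidef.trace_mul_nonneg {A B : Matrix n n ℂ} (hA : A.PosSemidef)
    (hB : B.PosSemidef) : 0 ≤ (A * B).trace := by
  have hsq : (CFC.sqrt A).IsHermitian := (CFC.sqrt_nonneg A).posSemidef.1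
  rw [← CFC.sqrt_mul_sqrt_self A hA.nonneg, Matrix.mul_assoc, trace_mul_comm, Matrix.mul_assoc]
  simpa [← Matrix.mul_assoc, hsq.eq] using (hB.conjTranspose_mul_mul_same (CFC.sqrt A)).trace_nonneg

lemma Matrix.IsHermitian.le_algebraMap_of_eigenvalues_le {A : Matrix n n ℂ} (hA : A.IsHermitian)
    {c : ℝ} (h : ∀ i, hA.eigenvalues i ≤ c) : A ≤ algebraMap ℝ _ c :=
  le_algebraMap_of_spectrum_le (by rw [hA.spectrum_real_eq_range_eigenvalues]; grind)
    hA.isSelfAdjoint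

lemma IsDensity.re_trace_mul_le {M σ : Matrix n n ℂ} (hσ : IsDensity σ) {c : ℝ}
    (hM : M ≤ algebraMap ℝ _ c) : (M * σ).trace.re ≤ c := by
  have h := (le_iff.1 hM).trace_mul_nonneg hσ.1
  rw [Matrix.sub_mul, trace_sub, Algebra.algebraMap_eq_smul_one, smul_mul, Matrix.one_mul,
    trace_smul, hσ.2] at h
  simpa using (Complex.nonneg_iff.1 h).1

lemma Matrix.IsHermitian.star_eigenvectorBasis_dotProduct_self {A : Matrix n n ℂ}
    (hA : A.IsHermitian) (i : n) :
    star ⇑(hA.eigenvectorBasis i) ⬝ᵥ ⇑(hA.eigenvectorBasis i) = 1 := by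
  rw [dotProduct_comm, ← EuclideanSpace.inner_eq_star_dotProduct,
    inner_self_eq_norm_sq_to_K, hA.eigenvectorBasis.orthonormal.1 i]
  simp

lemma Matrix.IsHermitian.eq_smul_vecMulVec_eigenvectorBasis {A : Matrix n n ℂ}
    (hA : A.IsHermitian) {i : n} (hz : ∀ j, j ≠ i → hA.eigenvalues j = 0) :
    A = (hA.eigenvalues i : ℂ) •
      vecMulVec ⇑(hA.eigenvectorBasis i) (star ⇑(hA.eigenvectorBasis i)) := by
  have hD : diagonal (RCLike.ofReal ∘ hA.eigenvalues) =
      (hA.eigenvalues i : ℂ) • vecMulVec (Pi.single i (1 : ℂ)) (star (Pi.single i 1)) := by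
    ext k l
    by_cases hk : k = i <;> by_cases hl : l = i <;> simp_all [diagonal_apply, vecMulVec_apply]
  conv_lhs => rw [hA.spectral_theorem, Unitary.conjStarAlgAut_apply, hD]
  rw [← hA.eigenvectorUnitary_mulVec, star_mulVec, Matrix.mul_smul, Matrix.smul_mul,
    mul_vecMulVec, vecMulVec_mul]
  rfl

lemma Matrix.PosSemidef.eigenvalues_eq_zero_of_re_trace_le {M : Matrix n n ℂ}
    (hM : M.PosSemidef) {i : n} (h : M.trace.re ≤ hM.1.eigenvalues i) (j : n) (hj : j ≠ i) :
    hM.1.eigenvalues j = 0 := by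
  have hsum : M.trace.re = hM.1.eigenvalues i + ∑ k ∈ Finset.univ.erase i, hM.1.eigenvalues k := by
    simp [hM.1.trace_eq_sum_eigenvalues]
  have hrest : ∑ k ∈ Finset.univ.erase i, hM.1.eigenvalues k = 0 :=
    le_antisymm (by linarith) (Finset.sum_nonneg fun k _ => hM.eigenvalues_nonneg k)
  exact (Finset.sum_eq_zero_iff_of_nonneg (fun k _ => hM.eigenvalues_nonneg k)).1 hrest j
    (Finset.mem_erase.2 ⟨hj, Finset.mem_univ j⟩)

lemma Matrix.PosSemidef.exists_eq_smul_vecMulVec_of_re_trace_le {M : Matrix n n ℂ}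
    (hM : M.PosSemidef) {i : n} (h : M.trace.re ≤ hM.1.eigenvalues i) :
    ∃ φ : n → ℂ, star φ ⬝ᵥ φ = 1 ∧ M = (M.trace.re : ℂ) • vecMulVec φ (star φ) := by
  have hz := hM.eigenvalues_eq_zero_of_re_trace_le h
  have htr : M.trace.re = hM.1.eigenvalues i := by
    simp [hM.1.trace_eq_sum_eigenvalues, Fintype.sum_eq_single i hz]
  exact ⟨_, hM.1.star_eigenvectorBasis_dotProduct_self i,
    htr ▸ hM.1.eq_smul_vecMulVec_eigenvectorBasis hz⟩

lemma Matrix.PosSemidef.eigenvalues_le_re_trace {M : Matrix n n ℂ} (hM : M.PosSemidef) (i : n) :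
    hM.1.eigenvalues i ≤ M.trace.re := by
  simpa [hM.1.trace_eq_sum_eigenvalues] using
    Finset.single_le_sum (fun j _ => hM.eigenvalues_nonneg j) (Finset.mem_univ i)

lemma Matrix.PosSemidef.mul_eq_zero_of_trace_conjTranspose_mul_mul_eq_zero {A B : Matrix n n ℂ}
    (hA : A.PosSemidef) (h : (Bᴴ * A * B).trace = 0) : A * B = 0 := by
  obtain ⟨C, rfl⟩ := CStarAlgebra.nonneg_iff_eq_star_mul_self.1 hA.nonneg
  have hCB : C * B = 0 := by
    rw [← trace_conjTranspose_mul_self_eq_zero_iff]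
    simpa [conjTranspose_mul, Matrix.mul_assoc, star_eq_conjTranspose] using h
  rw [Matrix.mul_assoc, hCB, Matrix.mul_zero]

lemma mul_eq_zero_of_matAbs_mul_eq_zero {A B : Matrix n n ℂ} (h : matAbs A * B = 0) :
    A * B = 0 := by
  rw [← conjTranspose_mul_self_eq_zero]
  calc (A * B)ᴴ * (A * B) = Bᴴ * (matAbs A * matAbs A) * B := by
        rw [matAbs_mul_matAbs, conjTranspose_mul]; simp only [Matrix.mul_assoc]
    _ = (matAbs A * B)ᴴ * (matAbs A * B) := by
        rw [conjTranspose_mul, (matAbs_posSemidef A).1.eq]; simp only [Matrix.mul_assoc]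
    _ = 0 := by rw [h, Matrix.mul_zero]

lemma mul_eq_self_of_trace_matAbs_mul_eq {A P : Matrix n n ℂ} (hP : P.IsHermitian)
    (hPP : P * P = P) (h : (matAbs A * P).trace = (matAbs A).trace) : A * P = A := by
  set Q := 1 - P
  have hQ : Qᴴ = Q := by simp [Q, hP.eq]
  have hQQ : Q * Q = Q := by simp [Q, Matrix.sub_mul, Matrix.mul_sub, hPP]
  have hAQ : matAbs A * Q = 0 := by
    refine (matAbs_posSemidef A).mul_eq_zero_of_trace_conjTranspose_mul_mul_eq_zero ?_
    rw [hQ, trace_mul_cycle, hQQ, trace_mul_comm, Matrix.mul_sub, Matrix.mul_one, trace_sub, h,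
      sub_self]
  have := mul_eq_zero_of_matAbs_mul_eq_zero hAQ
  rwa [Matrix.mul_sub, Matrix.mul_one, sub_eq_zero, eq_comm] at this

end Spectral

section PartialTrace

variable {l n R : Type*} [Fintype l]

def Matrix.partialTraceLeft [AddCommMonoid R] (A : Matrix (l × n) (l × n) R) : Matrix n n R :=
  of fun k k' => ∑ b, A (b, k) (b, k')

lemma Matrix.PosSemidef.partialTraceLeft [Ring R] [PartialOrder R] [StarRing R] [AddLeftMono R]
    {A : Matrix (l × n) (l × n) R} (hA : A.PosSemidef) : A.partialTraceLeft.PosSemidef := by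
  have h : A.partialTraceLeft = ∑ b, A.submatrix (b, ·) (b, ·) := by
    ext k k'
    simp [Matrix.partialTraceLeft, Matrix.sum_apply]
  rw [h]
  exact posSemidef_sum _ fun b _ => hA.submatrix _

lemma Matrix.trace_partialTraceLeft [Fintype n] [AddCommMonoid R] (A : Matrix (l × n) (l × n) R) :
    A.partialTraceLeft.trace = A.trace := by
  simp only [trace, diag, partialTraceLeft, of_apply, Fintype.sum_prod_type]
  exact Finset.sum_comm

lemma Matrix.trace_mul_one_kronecker [Fintype n] [DecidableEq l] [CommSemiring R]
    (A : Matrix (l × n) (l × n) R) (τ : Matrix n n R) :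
    (A * ((1 : Matrix l l R) ⊗ₖ τ)).trace = (A.partialTraceLeft * τ).trace := by
  calc (A * ((1 : Matrix l l R) ⊗ₖ τ)).trace
      = ∑ b, ∑ k, ∑ k', A (b, k) (b, k') * τ k' k := by
        simp [trace, mul_apply, one_apply, Fintype.sum_prod_type]
    _ = ∑ k, ∑ k', ∑ b, A (b, k) (b, k') * τ k' k := by
        rw [Finset.sum_comm]
        exact Finset.sum_congr rfl fun _ _ => Finset.sum_comm
    _ = (A.partialTraceLeft * τ).trace := by
        simp [trace, mul_apply, partialTraceLeft, Finset.sum_mul]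

end PartialTrace

section Choi

variable {l n : Type*} [Fintype l] [DecidableEq l] [Fintype n] [DecidableEq n]

lemma Matrix.IsHermitian.traceNorm_conj_one_kronecker_matSqrt_le
    {J : Matrix (l × n) (l × n) ℂ} (hJ : J.IsHermitian) {σ : Matrix n n ℂ} (hσ : IsDensity σ) :
    traceNorm (((1 : Matrix l l ℂ) ⊗ₖ matSqrt σ) * J * ((1 : Matrix l l ℂ) ⊗ₖ matSqrt σ)) ≤
      ((matAbs J).partialTraceLeft * σ).trace.re := by
  have hX := isHermitian_one (n := l) (α := ℂ) |>.kronecker (matSqrt_isHermitian hσ.1)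
  refine (hJ.traceNorm_mul_mul_le hX).trans_eq ?_
  rw [← mul_kronecker_mul, Matrix.one_mul, matSqrt_mul_self hσ.1, trace_mul_one_kronecker]

lemma Matrix.IsHermitian.one_kronecker_mul_mul_one_kronecker_eq_self
    {J : Matrix (l × n) (l × n) ℂ} (hJ : J.IsHermitian) {φ : n → ℂ} (hφ : star φ ⬝ᵥ φ = 1)
    (h : (matAbs J).partialTraceLeft = (traceNorm J : ℂ) • vecMulVec φ (star φ)) :
    ((1 : Matrix l l ℂ) ⊗ₖ vecMulVec φ (star φ)) * J *
      ((1 : Matrix l l ℂ) ⊗ₖ vecMulVec φ (star φ)) = J := by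
  set P := vecMulVec φ (star φ)
  have hPP : P * P = P := vecMulVec_star_mul_self hφ
  have hE : ((1 : Matrix l l ℂ) ⊗ₖ P).IsHermitian :=
    isHermitian_one.kronecker (isDensity_vecMulVec_star hφ).1.1
  have hEE : ((1 : Matrix l l ℂ) ⊗ₖ P) * ((1 : Matrix l l ℂ) ⊗ₖ P) = (1 : Matrix l l ℂ) ⊗ₖ P := by
    rw [← mul_kronecker_mul, Matrix.one_mul, hPP]
  have htr : (matAbs J * ((1 : Matrix l l ℂ) ⊗ₖ P)).trace = (matAbs J).trace := by
    rw [trace_mul_one_kronecker, h, Matrix.smul_mul, trace_smul, hPP,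
      (isDensity_vecMulVec_star hφ).2, smul_eq_mul, mul_one, traceNorm,
      (matAbs_posSemidef J).re_trace_eq_trace]
  have hJE := mul_eq_self_of_trace_matAbs_mul_eq hE hEE htr
  have hEJ : ((1 : Matrix l l ℂ) ⊗ₖ P) * J = J := by
    simpa [conjTranspose_mul, hJ.eq, hE.eq] using congrArg (fun X => Xᴴ) hJE
  rw [hEJ, hJE]

end Choi

/-- `‖S‖_⋄ = d·‖S‖_ME` iff there is a unit vector `φ` with
`M(S) = ‖J(S)‖₁ · φφᴴ`. -/
theorem stmt2 {d m : ℕ} (hd : 1 ≤ d)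
    (S : Matrix (Fin d) (Fin d) ℂ →ₗ[ℂ] Matrix (Fin m) (Fin m) ℂ)
    (hS : (choi S).IsHermitian) :
    diamondNorm S = d * MENorm S ↔
      ∃ φ : Fin d → ℂ, star φ ⬝ᵥ φ = 1 ∧
        Mop S = (traceNorm (choi S) : ℂ) • Matrix.vecMulVec φ (star φ) := by
  have hMop : Mop S = (matAbs (choi S)).partialTraceLeft := rfl
  have hM : (Mop S).PosSemidef := hMop ▸ (matAbs_posSemidef _).partialTraceLeft
  have htrM : (Mop S).trace.re = traceNorm (choi S) := by
    rw [hMop, trace_partialTraceLeft, traceNorm]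
  have : Nonempty (Fin d) := ⟨⟨0, hd⟩⟩
  obtain ⟨i, hmax⟩ := Finite.exists_max hM.1.eigenvalues
  have hobj : ∀ σ : {σ : Matrix (Fin d) (Fin d) ℂ // IsDensity σ},
      traceNorm (((1 : Matrix (Fin m) (Fin m) ℂ) ⊗ₖ matSqrt σ.1) * choi S *
        ((1 : Matrix (Fin m) (Fin m) ℂ) ⊗ₖ matSqrt σ.1)) ≤ hM.1.eigenvalues i := fun σ =>
    (hS.traceNorm_conj_one_kronecker_matSqrt_le σ.2).trans
      (σ.2.re_trace_mul_le (hM.1.le_algebraMap_of_eigenvalues_le hmax))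
  have hdiamond : diamondNorm S ≤ hM.1.eigenvalues i := Real.iSup_le hobj (hM.eigenvalues_nonneg i)
  have hdME : (d : ℝ) * MENorm S = traceNorm (choi S) := by
    rw [MENorm, mul_div_cancel₀ _ (by exact_mod_cast (by omega : d ≠ 0))]
  rw [hdME]
  constructor
  · intro h
    obtain ⟨φ, hφ, hMφ⟩ := hM.exists_eq_smul_vecMulVec_of_re_trace_le (htrM ▸ h ▸ hdiamond)
    exact ⟨φ, hφ, htrM ▸ hMφ⟩
  · rintro ⟨φ, hφ, hMφ⟩
    refine le_antisymm (htrM ▸ hdiamond.trans (hM.eigenvalues_le_re_trace i)) ?_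
    have hP := isDensity_vecMulVec_star hφ
    have := le_ciSup ⟨_, Set.forall_mem_range.2 hobj⟩ (⟨_, hP⟩ : {σ // IsDensity σ})
    rwa [matSqrt_eq_self_of_mul_self_eq hP.1 (vecMulVec_star_mul_self hφ),
      hS.one_kronecker_mul_mul_one_kronecker_eq_self hφ (hMop ▸ hMφ)] at this

end
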